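/- Let U be a finite nonempty set and S a finite family of subsets of U whose union is U (a feasible set covering instance). Consider the UFL instance with facility set S, client set U, demand d u = 1 for every u ∈ U, opening cost f T = 1 for every T ∈ S, and costs c T u = 0 if u ∈ T and c T u = 2 otherwise. Then the minimum objective value over all feasible UFL solutions of this instance equals the minimum cardinality of a subfamily of S whose union is U; in particular, every optimal UFL solution ships flow only along edges of cost 0 and the sets opened in an optimal solution form a minimum-size cover of U. -/
import Mathlib

lemma ufl_lb {U : Type} [Fintype U] [DecidableEq U]
    (S : Finset (Finset U)) (hcover : ∀ u : U, ∃ T ∈ S, u ∈ T)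
    (c : {T // T ∈ S} → U → ℝ)
    (hc : ∀ (T : {T // T ∈ S}) (u : U), c T u = if u ∈ T.1 then 0 else 2)
    (x : {T // T ∈ S} → U → ℝ) (z : {T // T ∈ S} → ℝ)
    (hx : ∀ T u, 0 ≤ x T u) (hz : ∀ T, z T = 0 ∨ z T = 1)
    (hdem : ∀ u, ∑ T, x T u = 1) (hxz : ∀ T u, z T = 0 → x T u = 0) :
    ((sInf {k : ℕ | ∃ 𝒯 ⊆ S, (∀ u : U, ∃ T ∈ 𝒯, u ∈ T) ∧ 𝒯.card = k} : ℕ) : ℝ)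
      ≤ (∑ T, ∑ u, c T u * x T u) + ∑ T, z T ∧
    ((∑ T, ∑ u, c T u * x T u) + ∑ T, z T
        = ((sInf {k : ℕ | ∃ 𝒯 ⊆ S, (∀ u : U, ∃ T ∈ 𝒯, u ∈ T) ∧ 𝒯.card = k} : ℕ) : ℝ) →
      (∀ T u, x T u ≠ 0 → u ∈ T.1) ∧
      (∀ u, ∃ T, z T = 1 ∧ u ∈ T.1) ∧
      (∑ T, z T) = ((sInf {k : ℕ | ∃ 𝒯 ⊆ S, (∀ u : U, ∃ T ∈ 𝒯, u ∈ T) ∧ 𝒯.card = k} : ℕ) : ℝ)) := by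
  classical
  set K := sInf {k : ℕ | ∃ 𝒯 ⊆ S, (∀ u : U, ∃ T ∈ 𝒯, u ∈ T) ∧ 𝒯.card = k} with hKdef
  set O : Finset {T // T ∈ S} := Finset.univ.filter (fun T => z T = 1) with hO
  set B : Finset U := Finset.univ.filter (fun u => ¬ ∃ T, z T = 1 ∧ u ∈ T.1) with hB
  have hc0 : ∀ T u, 0 ≤ c T u := by
    intro T u; rw [hc]; split <;> norm_num
  have hzsum : ∑ T, z T = (O.card : ℝ) := by
    rw [hO, ← Finset.sum_boole]
    refine Finset.sum_congr rfl fun T _ => ?_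
    rcases hz T with h | h <;> simp [h]
  have hserv_nonneg : ∀ u, 0 ≤ ∑ T, c T u * x T u := fun u =>
    Finset.sum_nonneg fun T _ => mul_nonneg (hc0 T u) (hx T u)
  have hBserv : ∀ u ∈ B, ∑ T, c T u * x T u = 2 := by
    intro u hu
    rw [hB, Finset.mem_filter] at hu
    have key : ∀ T : {T // T ∈ S}, c T u * x T u = 2 * x T u := by
      intro T
      by_cases hxT : x T u = 0
      · simp [hxT]
      · have hzT : z T = 1 := (hz T).resolve_left (fun h => hxT (hxz T u h))
        have hnT : u ∉ T.1 := fun hm => hu.2 ⟨T, hzT, hm⟩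
        rw [hc]; simp [hnT]
    rw [Finset.sum_congr rfl (fun T _ => key T), ← Finset.mul_sum, hdem u]
    norm_num
  have hserv : (2 * B.card : ℝ) ≤ ∑ u, ∑ T, c T u * x T u := by
    have h1 : (2 * B.card : ℝ) = ∑ u ∈ B, ∑ T, c T u * x T u := by
      rw [Finset.sum_congr rfl hBserv, Finset.sum_const, nsmul_eq_mul]; ring
    rw [h1]
    exact Finset.sum_le_sum_of_subset_of_nonneg (Finset.subset_univ B)
      (fun u _ _ => hserv_nonneg u)
  have hcomm : (∑ T, ∑ u, c T u * x T u) = ∑ u, ∑ T, c T u * x T u := Finset.sum_comm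
  choose g hg1 hg2 using hcover
  have hK1 : K ≤ O.card + B.card := by
    have hmem : (O.image (fun T => T.1) ∪ B.image g).card ∈
        {k : ℕ | ∃ 𝒯 ⊆ S, (∀ u : U, ∃ T ∈ 𝒯, u ∈ T) ∧ 𝒯.card = k} := by
      refine ⟨O.image (fun T => T.1) ∪ B.image g, ?_, ?_, rfl⟩
      · apply Finset.union_subset
        · intro T hT
          obtain ⟨T', _, rfl⟩ := Finset.mem_image.mp hT
          exact T'.2
        · intro T hT
          obtain ⟨u, _, rfl⟩ := Finset.mem_image.mp hT
          exact hg1 u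
      · intro u
        by_cases hu : ∃ T : {T // T ∈ S}, z T = 1 ∧ u ∈ T.1
        · obtain ⟨T, hzT, huT⟩ := hu
          exact ⟨T.1, Finset.mem_union_left _ (Finset.mem_image.mpr
            ⟨T, Finset.mem_filter.mpr ⟨Finset.mem_univ _, hzT⟩, rfl⟩), huT⟩
        · have huB : u ∈ B := Finset.mem_filter.mpr ⟨Finset.mem_univ _, hu⟩
          exact ⟨g u, Finset.mem_union_right _ (Finset.mem_image.mpr ⟨u, huB, rfl⟩), hg2 u⟩
    refine le_trans (Nat.sInf_le hmem) ?_
    refine le_trans (Finset.card_union_le _ _) ?_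
    exact Nat.add_le_add (Finset.card_image_le) (Finset.card_image_le)
  have hlb : (K : ℝ) ≤ (∑ T, ∑ u, c T u * x T u) + ∑ T, z T := by
    have h2 : (K : ℝ) ≤ O.card + B.card := by exact_mod_cast hK1
    rw [hcomm, hzsum]
    have hBnn : (0 : ℝ) ≤ B.card := by positivity
    linarith
  refine ⟨hlb, fun heq => ?_⟩
  have hBzero : B.card = 0 := by
    have h2 : (K : ℝ) ≤ O.card + B.card := by exact_mod_cast hK1
    rw [hcomm, hzsum] at heq
    have : (B.card : ℝ) ≤ 0 := by linarith
    exact_mod_cast le_antisymm this (by positivity)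
  have hBempty : B = ∅ := Finset.card_eq_zero.mp hBzero
  have hcov2 : ∀ u, ∃ T : {T // T ∈ S}, z T = 1 ∧ u ∈ T.1 := by
    intro u
    by_contra hu
    have : u ∈ B := Finset.mem_filter.mpr ⟨Finset.mem_univ _, hu⟩
    rw [hBempty] at this; exact absurd this (Finset.notMem_empty u)
  have hK2 : K ≤ O.card := by
    have hmem : (O.image (fun T => T.1)).card ∈
        {k : ℕ | ∃ 𝒯 ⊆ S, (∀ u : U, ∃ T ∈ 𝒯, u ∈ T) ∧ 𝒯.card = k} := by
      refine ⟨O.image (fun T => T.1), ?_, ?_, rfl⟩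
      · intro T hT
        obtain ⟨T', _, rfl⟩ := Finset.mem_image.mp hT
        exact T'.2
      · intro u
        obtain ⟨T, hzT, huT⟩ := hcov2 u
        exact ⟨T.1, Finset.mem_image.mpr
          ⟨T, Finset.mem_filter.mpr ⟨Finset.mem_univ _, hzT⟩, rfl⟩, huT⟩
    exact le_trans (Nat.sInf_le hmem) Finset.card_image_le
  have hK2' : (K : ℝ) ≤ O.card := by exact_mod_cast hK2
  have hserv0 : ∑ u, ∑ T, c T u * x T u = 0 := by
    rw [hcomm, hzsum] at heq
    have h3 : (0:ℝ) ≤ ∑ u, ∑ T, c T u * x T u :=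
      Finset.sum_nonneg fun u _ => hserv_nonneg u
    linarith
  have hOK : (O.card : ℝ) = K := by
    rw [hcomm, hzsum] at heq
    linarith
  refine ⟨?_, hcov2, by rw [hzsum, hOK]⟩
  intro T u hxT
  have h4 : ∀ u ∈ Finset.univ, (0:ℝ) ≤ ∑ T, c T u * x T u := fun u _ => hserv_nonneg u
  have h5 : ∑ T, c T u * x T u = 0 :=
    (Finset.sum_eq_zero_iff_of_nonneg h4).mp hserv0 u (Finset.mem_univ u)
  have h6 : c T u * x T u = 0 :=
    (Finset.sum_eq_zero_iff_of_nonneg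
      (fun T _ => mul_nonneg (hc0 T u) (hx T u))).mp h5 T (Finset.mem_univ T)
  by_contra hn
  rw [hc] at h6
  simp [hn, hxT] at h6

/-- the UFL encoding of set covering. For a feasible set covering
instance `(U, S)`, the minimum UFL objective value of the associated instance
(unit demands, unit opening costs, costs 0 inside a set and 2 outside) equals the
minimum cardinality of a subcover; moreover every optimal UFL solution ships flow
only along cost-0 edges and its opened sets form a minimum-size cover of `U`. -/
theorem stmt_17 {U : Type} [Fintype U] [Nonempty U] [DecidableEq U]
    (S : Finset (Finset U))
    (hcover : ∀ u : U, ∃ T ∈ S, u ∈ T)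
    -- the UFL instance with facility set S and client set U
    (d : U → ℕ) (hd : ∀ u, d u = 1)
    (f : {T // T ∈ S} → ℕ) (hf : ∀ T, f T = 1)
    (c : {T // T ∈ S} → U → ℝ)
    (hc : ∀ (T : {T // T ∈ S}) (u : U), c T u = if u ∈ T.1 then 0 else 2) :
    -- the minimum UFL objective value equals the minimum size of a subcover
    sInf {v : ℝ | ∃ (x : {T // T ∈ S} → U → ℝ) (z : {T // T ∈ S} → ℝ),
        (∀ T u, 0 ≤ x T u) ∧
        (∀ T, z T = 0 ∨ z T = 1) ∧
        (∀ u, ∑ T, x T u = (d u : ℝ)) ∧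
        (∀ (T : {T // T ∈ S}) (u : U), z T = 0 → x T u = 0) ∧
        v = (∑ T, ∑ u, c T u * x T u) + (∑ T, (f T : ℝ) * z T)}
      = (sInf {k : ℕ | ∃ 𝒯 ⊆ S, (∀ u : U, ∃ T ∈ 𝒯, u ∈ T) ∧ 𝒯.card = k} : ℕ) ∧
    -- every optimal UFL solution ships flow only along cost-0 edges
    -- and the opened sets form a minimum-size cover of U
    ∀ (x : {T // T ∈ S} → U → ℝ) (z : {T // T ∈ S} → ℝ),
      (∀ T u, 0 ≤ x T u) →
      (∀ T, z T = 0 ∨ z T = 1) →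
      (∀ u, ∑ T, x T u = (d u : ℝ)) →
      (∀ (T : {T // T ∈ S}) (u : U), z T = 0 → x T u = 0) →
      (∑ T, ∑ u, c T u * x T u) + (∑ T, (f T : ℝ) * z T)
        = (sInf {k : ℕ | ∃ 𝒯 ⊆ S, (∀ u : U, ∃ T ∈ 𝒯, u ∈ T) ∧ 𝒯.card = k} : ℕ) →
      (∀ (T : {T // T ∈ S}) (u : U), x T u ≠ 0 → u ∈ T.1) ∧
      (∀ u : U, ∃ T : {T // T ∈ S}, z T = 1 ∧ u ∈ T.1) ∧
      (∑ T, z T) = (sInf {k : ℕ | ∃ 𝒯 ⊆ S, (∀ u : U, ∃ T ∈ 𝒯, u ∈ T) ∧ 𝒯.card = k} : ℕ) := by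
  classical
  set K := sInf {k : ℕ | ∃ 𝒯 ⊆ S, (∀ u : U, ∃ T ∈ 𝒯, u ∈ T) ∧ 𝒯.card = k} with hKdef
  have hfz : ∀ z : {T // T ∈ S} → ℝ, (∑ T, (f T : ℝ) * z T) = ∑ T, z T := by
    intro z; refine Finset.sum_congr rfl fun T _ => ?_; rw [hf]; norm_num
  have hd1 : ∀ u, ((d u : ℝ)) = 1 := by intro u; rw [hd]; norm_num
  have hKmem : K ∈ {k : ℕ | ∃ 𝒯 ⊆ S, (∀ u : U, ∃ T ∈ 𝒯, u ∈ T) ∧ 𝒯.card = k} :=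
    Nat.sInf_mem ⟨S.card, S, Finset.Subset.refl S, hcover, rfl⟩
  obtain ⟨𝒯, h𝒯S, h𝒯cov, h𝒯card⟩ := hKmem
  have hex : ∀ u : U, ∃ T : {T // T ∈ S}, T.1 ∈ 𝒯 ∧ u ∈ T.1 := by
    intro u
    obtain ⟨T, hT, hu⟩ := h𝒯cov u
    exact ⟨⟨T, h𝒯S hT⟩, hT, hu⟩
  choose g hg1 hg2 using hex
  set x0 : {T // T ∈ S} → U → ℝ := fun T u => if T = g u then 1 else 0 with hx0
  set z0 : {T // T ∈ S} → ℝ := fun T => if T.1 ∈ 𝒯 then 1 else 0 with hz0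
  have hx0nn : ∀ T u, 0 ≤ x0 T u := by intro T u; rw [hx0]; dsimp; split <;> norm_num
  have hz0b : ∀ T, z0 T = 0 ∨ z0 T = 1 := by
    intro T; rw [hz0]; dsimp; split
    · right; rfl
    · left; rfl
  have hx0dem : ∀ u, ∑ T, x0 T u = (d u : ℝ) := by
    intro u
    rw [hd1, hx0]
    simp [Finset.sum_ite_eq]
  have hx0z0 : ∀ T u, z0 T = 0 → x0 T u = 0 := by
    intro T u hzT
    rw [hz0] at hzT; rw [hx0]; dsimp at *
    by_cases hT : T.1 ∈ 𝒯
    · simp [hT] at hzT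
    · have hne : T ≠ g u := by
        intro h; rw [h] at hT; exact hT (hg1 u)
      simp [hne]
  have hx0serv : (∑ T, ∑ u, c T u * x0 T u) = 0 := by
    refine Finset.sum_eq_zero fun T _ => Finset.sum_eq_zero fun u _ => ?_
    rw [hx0]; dsimp
    by_cases hT : T = g u
    · subst hT; rw [hc]; simp [hg2 u]
    · simp [hT]
  have hz0sum : (∑ T, z0 T) = (K : ℝ) := by
    rw [← h𝒯card, hz0]
    calc ∑ T : {T // T ∈ S}, (if (T : Finset U) ∈ 𝒯 then (1:ℝ) else 0)
        = ∑ T ∈ S, (if T ∈ 𝒯 then (1:ℝ) else 0) :=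
          Finset.sum_coe_sort S (fun T => if T ∈ 𝒯 then (1:ℝ) else 0)
      _ = ∑ T ∈ S ∩ 𝒯, (1:ℝ) := Finset.sum_ite_mem _ _ _
      _ = (𝒯.card : ℝ) := by
          rw [Finset.inter_eq_right.mpr h𝒯S, Finset.sum_const, nsmul_eq_mul, mul_one]
  have hKval : (K : ℝ) ∈ {v : ℝ | ∃ (x : {T // T ∈ S} → U → ℝ) (z : {T // T ∈ S} → ℝ),
        (∀ T u, 0 ≤ x T u) ∧
        (∀ T, z T = 0 ∨ z T = 1) ∧
        (∀ u, ∑ T, x T u = (d u : ℝ)) ∧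
        (∀ (T : {T // T ∈ S}) (u : U), z T = 0 → x T u = 0) ∧
        v = (∑ T, ∑ u, c T u * x T u) + (∑ T, (f T : ℝ) * z T)} :=
    ⟨x0, z0, hx0nn, hz0b, hx0dem, hx0z0, by rw [hfz, hx0serv, hz0sum]; ring⟩
  have hlow : ∀ v ∈ {v : ℝ | ∃ (x : {T // T ∈ S} → U → ℝ) (z : {T // T ∈ S} → ℝ),
        (∀ T u, 0 ≤ x T u) ∧
        (∀ T, z T = 0 ∨ z T = 1) ∧
        (∀ u, ∑ T, x T u = (d u : ℝ)) ∧
        (∀ (T : {T // T ∈ S}) (u : U), z T = 0 → x T u = 0) ∧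
        v = (∑ T, ∑ u, c T u * x T u) + (∑ T, (f T : ℝ) * z T)}, (K : ℝ) ≤ v := by
    rintro v ⟨x, z, h1, h2, h3, h4, rfl⟩
    rw [hfz]
    exact (ufl_lb S hcover c hc x z h1 h2 (fun u => by rw [h3, hd1]) h4).1
  constructor
  · exact le_antisymm (csInf_le ⟨(K : ℝ), hlow⟩ hKval) (le_csInf ⟨_, hKval⟩ hlow)
  · intro x z h1 h2 h3 h4 heq
    rw [hfz] at heq
    exact (ufl_lb S hcover c hc x z h1 h2 (fun u => by rw [h3, hd1]) h4).2 heq
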